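/- If the Finsler differential bound holds for a polytope P — i.e., there is C > 0 with ‖dΦ_x(v)‖₂ ≥ C‖v‖_x for all x ∈ int P and all v — then every rectifiable curve c in Φ(int P) has Euclidean length at least C times the Hilbert length of its preimage Φ⁻¹ ∘ c, and (int P, d) being complete implies Φ(int P) = ℝⁿ. -/

import Mathlib

open RealInnerProductSpace

/-!
The length bound is property (A) integrated along the curve. The only issue is integrability of
the right-hand side: `dΦ` is bounded on the compact trace of the curve, and the Hilbert norm
dominates `‖·‖ / diam P` because both boundary points in direction `±w` lie within `diam P`.

For surjectivity, `Φ` is the gradient of `∑ (fᵢ log fᵢ - fᵢ)`, whose Hessian `∑ fᵢ⁻¹ gᵢ gᵢᵀ` is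
positive definite on `int P` (the `gᵢ` span because `P` is bounded), so `Φ` is open on `int P` by
the inverse function theorem. Its image is also closed: if `zₖ → x` with `fⱼ(x) = 0`, then
`⟪Φ zₖ, x₀ - x⟫ = ∑ (fᵢ x₀ - fᵢ x) log fᵢ(zₖ) → -∞`, because the `j`-th term diverges while every
other term stays bounded above. Being clopen and nonempty, the image is all of `ℝⁿ`.
-/

open Filter Topology Set Metric Bornology MeasureTheory

section Rays

variable {E : Type*} [NormedAddCommGroup E] [NormedSpace ℝ E] {s : Set E} {x w : E}

theorem exists_nonneg_add_smul_notMem (hs : IsBounded s) (hw : w ≠ 0) (x : E) :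
    ∃ t : ℝ, 0 ≤ t ∧ x + t • w ∉ s := by
  obtain ⟨R, hR⟩ := isBounded_iff_forall_norm_le.1 hs
  have hw' : 0 < ‖w‖ := norm_pos_iff.2 hw
  set t := (|R| + ‖x‖ + 1) / ‖w‖
  have ht : 0 ≤ t := by positivity
  refine ⟨t, ht, fun hmem => ?_⟩
  have h : ‖t • w‖ ≤ ‖x + t • w‖ + ‖x‖ := by simpa using norm_sub_le (x + t • w) x
  rw [norm_smul, Real.norm_of_nonneg ht, div_mul_cancel₀ _ hw'.ne'] at h
  linarith [hR _ hmem, le_abs_self R]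

theorem exists_pos_add_smul_mem_frontier (hs : IsBounded s) (hx : x ∈ interior s) (hw : w ≠ 0) :
    ∃ t : ℝ, 0 < t ∧ x + t • w ∈ frontier s := by
  by_contra! h
  have hray : (fun t : ℝ => x + t • w) '' Ici 0 ⊆ interior s := by
    refine (isPreconnected_Ici.image _ (by fun_prop)).subset_left_of_subset_union isOpen_interior
      isClosed_closure.isOpen_compl (disjoint_compl_right.mono_left interior_subset_closure)
      ?_ ⟨x, ⟨0, self_mem_Ici, by simp⟩, hx⟩
    rintro _ ⟨t, ht, rfl⟩
    rcases (mem_Ici.1 ht).eq_or_lt with rfl | ht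
    · simp [hx]
    · by_contra hy
      simp only [mem_union, mem_compl_iff, not_or, not_not] at hy
      exact h t ht ⟨hy.2, hy.1⟩
  obtain ⟨t, ht, hts⟩ := exists_nonneg_add_smul_notMem hs hw x
  exact hts (interior_subset (hray ⟨t, ht, rfl⟩))

theorem norm_le_diam_mul_of_frontier {N : E → E → ℝ} (hs : IsCompact s) (hN0 : ∀ x, N x 0 = 0)
    (hN : ∀ x ∈ interior s, ∀ w : E, w ≠ 0 → ∀ t1 t2 : ℝ, 0 < t1 → 0 < t2 →
      x + t1 • w ∈ frontier s → x - t2 • w ∈ frontier s → N x w = (1/2) * (1/t1 + 1/t2))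
    (hx : x ∈ interior s) (w : E) :
    ‖w‖ ≤ diam s * N x w := by
  rcases eq_or_ne w 0 with rfl | hw
  · simp [hN0]
  obtain ⟨t1, ht1, h1⟩ := exists_pos_add_smul_mem_frontier hs.isBounded hx hw
  obtain ⟨t2, ht2, h2⟩ := exists_pos_add_smul_mem_frontier hs.isBounded hx (neg_ne_zero.2 hw)
  rw [smul_neg, ← sub_eq_add_neg] at h2
  have hfr := hs.isClosed.frontier_subset
  have e1 : ‖w‖ ≤ diam s / t1 := by
    rw [le_div_iff₀ ht1]
    simpa [dist_eq_norm, norm_smul, abs_of_pos ht1, mul_comm] using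
      dist_le_diam_of_mem hs.isBounded (hfr h1) (interior_subset hx)
  have e2 : ‖w‖ ≤ diam s / t2 := by
    rw [le_div_iff₀ ht2]
    simpa [dist_eq_norm, norm_smul, abs_of_pos ht2, mul_comm] using
      dist_le_diam_of_mem hs.isBounded (hfr h2) (interior_subset hx)
  rw [hN x hx w hw t1 t2 ht1 ht2 h1 h2]
  linarith [show diam s * (1 / 2 * (1 / t1 + 1 / t2)) = (diam s / t1 + diam s / t2) / 2 by ring]

end Rays

theorem isBoundedUnder_le_log_mul {α : Type*} {l : Filter α} {s : α → ℝ} {σ a : ℝ}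
    (hs : Tendsto s l (𝓝 σ)) (hs0 : ∀ k, 0 ≤ s k) (ha : σ = 0 → 0 ≤ a) :
    IsBoundedUnder (· ≤ ·) l fun k => Real.log (s k) * a := by
  rcases eq_or_ne σ 0 with rfl | hσ
  · exact isBoundedUnder_of_eventually_le <| (hs.eventually (ge_mem_nhds zero_lt_one)).mono
      fun k hk => mul_nonpos_of_nonpos_of_nonneg (Real.log_nonpos (hs0 k) hk) (ha rfl)
  · exact (((Real.continuousAt_log hσ).tendsto.comp hs).mul_const a).isBoundedUnder_le

theorem tendsto_sum_atBot {α ι G : Type*} [Fintype ι] [AddCommGroup G] [LinearOrder G]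
    [IsOrderedAddMonoid G] {l : Filter α} {F : ι → α → G} {j : ι} (hj : Tendsto (F j) l atBot)
    (hF : ∀ i, IsBoundedUnder (· ≤ ·) l (F i)) : Tendsto (fun k => ∑ i, F i k) l atBot := by
  classical
  obtain ⟨C, hC⟩ := isBoundedUnder_le_sum (Finset.univ.erase j) fun i _ => hF i
  simp_rw [← Finset.add_sum_erase _ _ (Finset.mem_univ j)]
  exact tendsto_atBot_add_right_of_ge' l C hj (by simpa using hC)

theorem mul_integral_le_integral_of_le_of_le_mul {f G : ℝ → ℝ} {a c C K : ℝ} (hac : a ≤ c)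
    (hG : AEStronglyMeasurable G (volume.restrict (Ioc a c))) (hG0 : ∀ t ∈ Icc a c, 0 ≤ G t)
    (hlow : ∀ t ∈ Icc a c, C * f t ≤ G t) (hup : ∀ t ∈ Icc a c, G t ≤ K * f t) :
    C * ∫ t in a..c, f t ≤ ∫ t in a..c, G t := by
  by_cases hf : IntervalIntegrable f volume a c
  · have hGint : IntervalIntegrable G volume a c := by
      rw [intervalIntegrable_iff_integrableOn_Ioc_of_le hac] at hf ⊢
      refine (hf.const_mul K).mono' hG (ae_restrict_of_forall_mem measurableSet_Ioc fun t ht => ?_)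
      rw [Real.norm_of_nonneg (hG0 t (Ioc_subset_Icc_self ht))]
      exact hup t (Ioc_subset_Icc_self ht)
    rw [← intervalIntegral.integral_const_mul]
    exact intervalIntegral.integral_mono_on hac (hf.const_mul C) hGint hlow
  -- the integral of a non-integrable function is the junk value `0`
  · rw [intervalIntegral.integral_undef hf, mul_zero]
    exact intervalIntegral.integral_nonneg hac hG0

section Polyhedron

variable {E : Type*} [NormedAddCommGroup E] [InnerProductSpace ℝ E] {ι : Type*}
  (g : ι → E) (b : ι → ℝ)

def polyhedron : Set E := {x | ∀ i, 0 ≤ ⟪g i, x⟫ + b i}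

variable {g b} {x v : E}

theorem inner_add_pos_of_mem_interior (hx : x ∈ interior (polyhedron g b)) {i : ι} (hi : g i ≠ 0) :
    0 < ⟪g i, x⟫ + b i := by
  refine (interior_subset hx i).lt_of_ne' fun hxi => hi ?_
  have hmin : IsLocalMin (fun y => ⟪g i, y⟫ + b i) x := by
    filter_upwards [mem_interior_iff_mem_nhds.1 hx] with y hy
    exact hxi ▸ hy i
  have hderiv := hmin.hasFDerivAt_eq_zero ((innerSL ℝ (g i)).hasFDerivAt.add_const (b i))
  simpa using congr($hderiv (g i))

theorem mem_interior_polyhedron [Finite ι] (hx : x ∈ polyhedron g b)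
    (hpos : ∀ i, g i ≠ 0 → 0 < ⟪g i, x⟫ + b i) : x ∈ interior (polyhedron g b) := by
  have hopen : IsOpen {y | ∀ i, (g i ≠ 0 → 0 < ⟪g i, y⟫ + b i) ∧ 0 ≤ ⟪g i, y⟫ + b i} := by
    simp only [ofPred_forall]
    refine isOpen_iInter_of_finite fun i => ?_
    by_cases hi : g i = 0
    · simp [hi, isOpen_const]
    · simpa [hi, and_iff_left_of_imp LT.lt.le] using
        isOpen_lt continuous_const (by fun_prop : Continuous fun y => ⟪g i, y⟫ + b i)
  exact interior_maximal (fun y hy i => (hy i).2) hopen fun i => ⟨hpos i, hx i⟩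

theorem eq_zero_of_forall_inner_eq_zero_of_isBounded (hP : IsBounded (polyhedron g b))
    (hne : (polyhedron g b).Nonempty) (hv : ∀ i, ⟪g i, v⟫ = 0) : v = 0 := by
  by_contra hv0
  obtain ⟨x, hx⟩ := hne
  obtain ⟨t, -, ht⟩ := exists_nonneg_add_smul_notMem hP hv0 x
  exact ht fun i => by simpa [inner_add_right, inner_smul_right, hv i] using hx i

variable [Fintype ι]

variable (g b) in
noncomputable def logMap (x : E) : E := ∑ i, Real.log (⟪g i, x⟫ + b i) • g i

variable (g b) in
noncomputable def logMapDeriv (x : E) : E →L[ℝ] E :=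
  ∑ i, (⟪g i, x⟫ + b i)⁻¹ • (innerSL ℝ (g i)).smulRight (g i)

theorem logMapDeriv_apply :
    logMapDeriv g b x v = ∑ i, (⟪g i, v⟫ / (⟪g i, x⟫ + b i)) • g i := by
  simp [logMapDeriv, smul_smul, div_eq_inv_mul]

theorem inner_logMapDeriv_apply_self :
    ⟪logMapDeriv g b x v, v⟫ = ∑ i, ⟪g i, v⟫ ^ 2 / (⟪g i, x⟫ + b i) := by
  simp only [logMapDeriv_apply, sum_inner, real_inner_smul_left]
  exact Finset.sum_congr rfl fun i _ => by ring

theorem hasStrictFDerivAt_logMap (hx : x ∈ interior (polyhedron g b)) :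
    HasStrictFDerivAt (logMap g b) (logMapDeriv g b x) x := by
  refine HasStrictFDerivAt.fun_sum fun i _ => ?_
  by_cases hi : g i = 0
  · simpa [hi] using hasStrictFDerivAt_const (0 : E) x
  · have hf : HasStrictFDerivAt (fun y => ⟪g i, y⟫ + b i) (innerSL ℝ (g i)) x :=
      (innerSL ℝ (g i)).hasStrictFDerivAt.add_const (b i)
    have h := ((Real.hasStrictDerivAt_log
      (inner_add_pos_of_mem_interior hx hi).ne').comp_hasStrictFDerivAt x hf).smul_const (g i)
    convert h using 1 <;> ext <;> simp [smul_smul]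

theorem continuousOn_logMapDeriv : ContinuousOn (logMapDeriv g b) (interior (polyhedron g b)) := by
  refine continuousOn_finsetSum _ fun i _ => ?_
  by_cases hi : g i = 0
  · simpa [hi] using continuousOn_const
  · exact ((Continuous.continuousOn (by fun_prop)).inv₀
      fun x hx => (inner_add_pos_of_mem_interior hx hi).ne').smul continuousOn_const

theorem logMapDeriv_injective (hP : IsBounded (polyhedron g b))
    (hx : x ∈ interior (polyhedron g b)) : Function.Injective (logMapDeriv g b x) := by
  refine (injective_iff_map_eq_zero _).2 fun v hv => ?_
  have hsum := inner_logMapDeriv_apply_self (g := g) (b := b) (x := x) (v := v)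
  rw [hv, inner_zero_left, eq_comm, Finset.sum_eq_zero_iff_of_nonneg
    fun i _ => div_nonneg (sq_nonneg _) (interior_subset hx i)] at hsum
  refine eq_zero_of_forall_inner_eq_zero_of_isBounded hP ⟨x, interior_subset hx⟩ fun i => ?_
  by_cases hi : g i = 0
  · simp [hi]
  · simpa [(inner_add_pos_of_mem_interior hx hi).ne'] using hsum i (Finset.mem_univ i)

theorem isOpen_image_logMap [FiniteDimensional ℝ E] (hP : IsBounded (polyhedron g b)) :
    IsOpen (logMap g b '' interior (polyhedron g b)) := by
  rw [isOpen_iff_mem_nhds]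
  rintro _ ⟨x, hx, rfl⟩
  have hsurj := LinearMap.injective_iff_surjective.1 (logMapDeriv_injective hP hx)
  rw [← (hasStrictFDerivAt_logMap hx).map_nhds_eq_of_surj (LinearMap.range_eq_top.2 hsurj)]
  exact image_mem_map (isOpen_interior.mem_nhds hx)

theorem tendsto_inner_logMap_atBot {α : Type*} {l : Filter α} {z : α → E} {x x₀ : E} {j : ι}
    (hz : ∀ k, z k ∈ interior (polyhedron g b)) (hzx : Tendsto z l (𝓝 x))
    (hx₀ : x₀ ∈ interior (polyhedron g b)) (hj : g j ≠ 0) (hxj : ⟪g j, x⟫ + b j = 0) :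
    Tendsto (fun k => ⟪logMap g b (z k), x₀ - x⟫) l atBot := by
  have hf : ∀ i, Tendsto (fun k => ⟪g i, z k⟫ + b i) l (𝓝 (⟪g i, x⟫ + b i)) := fun i =>
    (tendsto_const_nhds.inner hzx).add_const (b i)
  have hcoef : ∀ i, ⟪g i, x₀ - x⟫ = (⟪g i, x₀⟫ + b i) - (⟪g i, x⟫ + b i) := fun i => by
    rw [inner_sub_right]; ring
  simp only [logMap, sum_inner, real_inner_smul_left, hcoef]
  refine tendsto_sum_atBot (j := j) ?_ fun i => isBoundedUnder_le_log_mul (hf i)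
    (fun k => interior_subset (hz k) i) fun hxi => by simpa [hxi] using interior_subset hx₀ i
  rw [hxj, sub_zero]
  refine (Real.tendsto_log_nhdsGT_zero.comp ?_).atBot_mul_const
    (inner_add_pos_of_mem_interior hx₀ hj)
  exact tendsto_nhdsWithin_iff.2
    ⟨hxj ▸ hf j, Eventually.of_forall fun k => inner_add_pos_of_mem_interior (hz k) hj⟩

theorem isClosed_image_logMap (hP : IsCompact (polyhedron g b)) :
    IsClosed (logMap g b '' interior (polyhedron g b)) := by
  refine IsSeqClosed.isClosed fun u y hu hy => ?_
  choose z hz hzu using hu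
  obtain ⟨x, hxP, φ, hφ, hzx⟩ := hP.tendsto_subseq fun k => interior_subset (hz k)
  have hy' : Tendsto (fun k => logMap g b (z (φ k))) atTop (𝓝 y) := by
    simpa [Function.comp_def, hzu] using hy.comp hφ.tendsto_atTop
  have hx : x ∈ interior (polyhedron g b) := by
    refine mem_interior_polyhedron hxP fun j hj => (hxP j).lt_of_ne' fun hxj => ?_
    exact not_tendsto_atBot_of_tendsto_nhds (hy'.inner tendsto_const_nhds)
      (tendsto_inner_logMap_atBot (fun k => hz (φ k)) hzx (hz 0) hj hxj)
  exact ⟨x, hx, tendsto_nhds_unique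
    ((hasStrictFDerivAt_logMap hx).continuousAt.tendsto.comp hzx) hy'⟩

theorem image_logMap_interior_polyhedron [FiniteDimensional ℝ E]
    (hP : IsCompact (polyhedron g b)) (hne : (interior (polyhedron g b)).Nonempty) :
    logMap g b '' interior (polyhedron g b) = univ :=
  IsClopen.eq_univ ⟨isClosed_image_logMap hP, isOpen_image_logMap hP.isBounded⟩ (hne.image _)

theorem exists_norm_logMapDeriv_apply_le {K : Set E} (hK : IsCompact K)
    (hKP : K ⊆ interior (polyhedron g b)) :
    ∃ M, 0 ≤ M ∧ ∀ x ∈ K, ∀ v, ‖logMapDeriv g b x v‖ ≤ M * ‖v‖ := by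
  obtain ⟨M, hM⟩ := hK.exists_bound_of_continuousOn (continuousOn_logMapDeriv.mono hKP)
  exact ⟨max M 0, le_max_right _ _, fun x hx v => (ContinuousLinearMap.le_opNorm _ v).trans
    (mul_le_mul_of_nonneg_right ((hM x hx).trans (le_max_left _ _)) (norm_nonneg v))⟩

theorem aestronglyMeasurable_logMapDeriv_comp [CompleteSpace E] {γ γ' : ℝ → E} {a c : ℝ}
    (hγ : ∀ t ∈ Icc a c, γ t ∈ interior (polyhedron g b))
    (hγ' : ∀ t ∈ Icc a c, HasDerivAt γ (γ' t) t) :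
    AEStronglyMeasurable (fun t => logMapDeriv g b (γ t) (γ' t)) (volume.restrict (Ioc a c)) := by
  have hIoc : Ioc a c ⊆ Icc a c := Ioc_subset_Icc_self
  have hγc : ContinuousOn γ (Ioc a c) := fun t ht =>
    (hγ' t (hIoc ht)).continuousAt.continuousWithinAt
  have hD : AEStronglyMeasurable (fun t => logMapDeriv g b (γ t)) (volume.restrict (Ioc a c)) :=
    (continuousOn_logMapDeriv.comp hγc fun t ht => hγ t (hIoc ht)).aestronglyMeasurable
      measurableSet_Ioc
  have hγ'm : AEStronglyMeasurable γ' (volume.restrict (Ioc a c)) :=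
    (stronglyMeasurable_deriv γ).aestronglyMeasurable.congr
      (ae_restrict_of_forall_mem measurableSet_Ioc fun t ht => (hγ' t (hIoc ht)).deriv)
  exact (ContinuousLinearMap.id ℝ (E →L[ℝ] E)).aestronglyMeasurable_comp₂ hD hγ'm

theorem mul_integral_le_integral_norm_logMapDeriv [CompleteSpace E] {N : E → E → ℝ}
    (hP : IsCompact (polyhedron g b)) (hN0 : ∀ x, N x 0 = 0)
    (hN : ∀ x ∈ interior (polyhedron g b), ∀ w : E, w ≠ 0 → ∀ t1 t2 : ℝ, 0 < t1 → 0 < t2 →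
      x + t1 • w ∈ frontier (polyhedron g b) → x - t2 • w ∈ frontier (polyhedron g b) →
      N x w = (1/2) * (1/t1 + 1/t2))
    {C : ℝ} (hA : ∀ x ∈ interior (polyhedron g b), ∀ v, C * N x v ≤ ‖logMapDeriv g b x v‖)
    {γ γ' : ℝ → E} {a c : ℝ} (hac : a ≤ c) (hγ : ∀ t ∈ Icc a c, γ t ∈ interior (polyhedron g b))
    (hγ' : ∀ t ∈ Icc a c, HasDerivAt γ (γ' t) t) :
    C * ∫ t in a..c, N (γ t) (γ' t) ≤ ∫ t in a..c, ‖logMapDeriv g b (γ t) (γ' t)‖ := by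
  have hγc : ContinuousOn γ (Icc a c) := fun t ht => (hγ' t ht).continuousAt.continuousWithinAt
  obtain ⟨M, hM0, hM⟩ := exists_norm_logMapDeriv_apply_le (isCompact_Icc.image_of_continuousOn hγc)
    (image_subset_iff.2 hγ)
  refine mul_integral_le_integral_of_le_of_le_mul (K := M * diam (polyhedron g b)) hac
    (aestronglyMeasurable_logMapDeriv_comp hγ hγ').norm (fun _ _ => norm_nonneg _)
    (fun t ht => hA _ (hγ t ht) _) fun t ht => ?_
  calc ‖logMapDeriv g b (γ t) (γ' t)‖ ≤ M * ‖γ' t‖ := hM _ (mem_image_of_mem γ ht) _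
    _ ≤ M * (diam (polyhedron g b) * N (γ t) (γ' t)) :=
        mul_le_mul_of_nonneg_left (norm_le_diam_mul_of_frontier hP hN0 hN (hγ t ht) _) hM0
    _ = M * diam (polyhedron g b) * N (γ t) (γ' t) := (mul_assoc _ _ _).symm

end Polyhedron

theorem curve_length_bound_and_surjective_general {n m : ℕ}
    (g : Fin m → EuclideanSpace ℝ (Fin n)) (b : Fin m → ℝ)
    (P : Set (EuclideanSpace ℝ (Fin n)))
    (hP : P = {x | ∀ i, 0 ≤ ⟪g i, x⟫ + b i})
    (hPcomp : IsCompact P) (hPint : (interior P).Nonempty)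
    -- the Hilbert Finsler norm
    (N : EuclideanSpace ℝ (Fin n) → EuclideanSpace ℝ (Fin n) → ℝ)
    (hN0 : ∀ x, N x 0 = 0)
    (hN : ∀ x ∈ interior P, ∀ w : EuclideanSpace ℝ (Fin n), w ≠ 0 →
      ∀ t1 t2 : ℝ, 0 < t1 → 0 < t2 →
        x + t1 • w ∈ frontier P → x - t2 • w ∈ frontier P →
        N x w = (1/2) * (1/t1 + 1/t2))
    (Φ : EuclideanSpace ℝ (Fin n) → EuclideanSpace ℝ (Fin n))
    (hΦ : ∀ x, Φ x = ∑ i, Real.log (⟪g i, x⟫ + b i) • g i)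
    -- property (A): the Finsler differential bound
    (C : ℝ)
    (hA : ∀ x ∈ interior P, ∀ v : EuclideanSpace ℝ (Fin n),
      C * N x v ≤ ‖∑ i, ((⟪g i, v⟫ / (⟪g i, x⟫ + b i)) • g i)‖) :
    (∀ γ γ' : ℝ → EuclideanSpace ℝ (Fin n),
      (∀ t ∈ Set.Icc (0:ℝ) 1, γ t ∈ interior P) →
      (∀ t ∈ Set.Icc (0:ℝ) 1, HasDerivAt γ (γ' t) t) →
      C * ∫ t in (0:ℝ)..1, N (γ t) (γ' t) ≤
        ∫ t in (0:ℝ)..1, ‖∑ i, ((⟪g i, γ' t⟫ / (⟪g i, γ t⟫ + b i)) • g i)‖) ∧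
    Φ '' interior P = Set.univ := by
  change P = polyhedron g b at hP
  obtain rfl : Φ = logMap g b := funext hΦ
  subst hP
  simp only [← logMapDeriv_apply] at hA ⊢
  exact ⟨fun γ γ' hγ hγ' => mul_integral_le_integral_norm_logMapDeriv hPcomp hN0 hN hA
    zero_le_one hγ hγ', image_logMap_interior_polyhedron hPcomp hPint⟩

/-- If the Finsler differential bound (A) holds for a polytope `P`, then the Euclidean length
of any (differentiable) curve in `Φ(int P)` is at least `C` times the Hilbert length of its
preimage, and by completeness of `(int P, d)` the image `Φ(int P)` is all of `ℝⁿ`. -/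
theorem curve_length_bound_and_surjective {n m : ℕ}
    (g : Fin m → EuclideanSpace ℝ (Fin n)) (b : Fin m → ℝ)
    (P : Set (EuclideanSpace ℝ (Fin n)))
    (hP : P = {x | ∀ i, 0 ≤ ⟪g i, x⟫ + b i})
    (hPcomp : IsCompact P) (hPint : (interior P).Nonempty)
    -- the Hilbert Finsler norm
    (N : EuclideanSpace ℝ (Fin n) → EuclideanSpace ℝ (Fin n) → ℝ)
    (hN0 : ∀ x, N x 0 = 0)
    (hN : ∀ x ∈ interior P, ∀ w : EuclideanSpace ℝ (Fin n), w ≠ 0 →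
      ∀ t1 t2 : ℝ, 0 < t1 → 0 < t2 →
        x + t1 • w ∈ frontier P → x - t2 • w ∈ frontier P →
        N x w = (1/2) * (1/t1 + 1/t2))
    -- the Hilbert metric and its completeness
    (d : EuclideanSpace ℝ (Fin n) → EuclideanSpace ℝ (Fin n) → ℝ)
    (hd0 : ∀ x, d x x = 0)
    (hd : ∀ x y, x ∈ interior P → y ∈ interior P → x ≠ y →
      ∀ a1 a2 : EuclideanSpace ℝ (Fin n), a1 ∈ frontier P → a2 ∈ frontier P →
      (∃ t1 t2 : ℝ, t1 < 0 ∧ 1 < t2 ∧ a1 = x + t1 • (y - x) ∧ a2 = x + t2 • (y - x)) →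
      d x y = (1/2) * Real.log ((‖y - a1‖ / ‖x - a1‖) * (‖x - a2‖ / ‖y - a2‖)))
    (hcomplete : ∀ u : ℕ → EuclideanSpace ℝ (Fin n), (∀ k, u k ∈ interior P) →
      (∀ ε > 0, ∃ K : ℕ, ∀ p ≥ K, ∀ q ≥ K, d (u p) (u q) < ε) →
      ∃ x ∈ interior P, ∀ ε > 0, ∃ K : ℕ, ∀ k ≥ K, d (u k) x < ε)
    (Φ : EuclideanSpace ℝ (Fin n) → EuclideanSpace ℝ (Fin n))
    (hΦ : ∀ x, Φ x = ∑ i, Real.log (⟪g i, x⟫ + b i) • g i)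
    -- property (A): the Finsler differential bound
    (C : ℝ) (hC : 0 < C)
    (hA : ∀ x ∈ interior P, ∀ v : EuclideanSpace ℝ (Fin n),
      C * N x v ≤ ‖∑ i, ((⟪g i, v⟫ / (⟪g i, x⟫ + b i)) • g i)‖) :
    (∀ γ γ' : ℝ → EuclideanSpace ℝ (Fin n),
      (∀ t ∈ Set.Icc (0:ℝ) 1, γ t ∈ interior P) →
      (∀ t ∈ Set.Icc (0:ℝ) 1, HasDerivAt γ (γ' t) t) →
      C * ∫ t in (0:ℝ)..1, N (γ t) (γ' t) ≤
        ∫ t in (0:ℝ)..1, ‖∑ i, ((⟪g i, γ' t⟫ / (⟪g i, γ t⟫ + b i)) • g i)‖) ∧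
    Φ '' interior P = Set.univ :=
  curve_length_bound_and_surjective_general g b P hP hPcomp hPint N hN0 hN Φ hΦ C hA
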